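/- arXiv:2301.10935 — 8 statements merged into one kernel-verified Lean document; each statement's English description precedes it below -/
import Mathlib

section
/- (Hilbert's Nichtnullstellensatz) Let A ⊆ ℂ[x₁,…,xₙ] and let S be a finite set of nonzero polynomials in ℂ[x₁,…,xₙ]. A polynomial p ∈ ℂ[x₁,…,xₙ] vanishes at every point a ∈ ℂⁿ satisfying q(a) = 0 for all q ∈ A and s(a) ≠ 0 for all s ∈ S, if and only if p belongs to the radical of the saturation (A) : S^∞ of the ideal (A) generated by A. -/
open MvPolynomial

/-- The saturation `I : S^∞` of an ideal `I` by a set `S`. -/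
def satBySet {n : ℕ} (I : Ideal (MvPolynomial (Fin n) ℂ))
    (S : Set (MvPolynomial (Fin n) ℂ)) : Set (MvPolynomial (Fin n) ℂ) :=
  {p | ∃ s ∈ Submonoid.closure S, s * p ∈ I}

/-- Hilbert's Nichtnullstellensatz: p vanishes at every complex
solution of (A = 0, S ≠ 0) iff p belongs to the radical of (A) : S^∞. -/
theorem stmt3 (n : ℕ) (A : Set (MvPolynomial (Fin n) ℂ))
    (S : Finset (MvPolynomial (Fin n) ℂ)) (hS : (0 : MvPolynomial (Fin n) ℂ) ∉ S)
    (p : MvPolynomial (Fin n) ℂ) :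
    (∀ a : Fin n → ℂ, (∀ q ∈ A, eval a q = 0) → (∀ s ∈ S, eval a s ≠ 0) →
        eval a p = 0) ↔
      ∃ N : ℕ, p ^ N ∈ satBySet (Ideal.span A) (↑S : Set (MvPolynomial (Fin n) ℂ)) := by
  set σ : MvPolynomial (Fin n) ℂ := ∏ s ∈ S, s with hσ
  have hσmem : σ ∈ Submonoid.closure (↑S : Set (MvPolynomial (Fin n) ℂ)) :=
    Submonoid.prod_mem _ fun s hs => Submonoid.subset_closure hs
  constructor
  · intro h
    have hvan : σ * p ∈ vanishingIdeal ℂ (zeroLocus ℂ (Ideal.span A)) := by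
      rw [mem_vanishingIdeal_iff]
      intro a ha
      rw [mem_zeroLocus_iff] at ha
      simp only [aeval_eq_eval] at ha ⊢
      have haA : ∀ q ∈ A, eval a q = 0 := fun q hq => ha q (Ideal.subset_span hq)
      by_cases hall : ∀ s ∈ S, eval a s ≠ 0
      · rw [map_mul, h a haA hall, mul_zero]
      · push_neg at hall
        obtain ⟨s, hsS, hs0⟩ := hall
        rw [map_mul, hσ, map_prod]
        rw [Finset.prod_eq_zero hsS hs0, zero_mul]
    rw [vanishingIdeal_zeroLocus_eq_radical] at hvan
    obtain ⟨N, hN⟩ := Ideal.mem_radical_iff.mp hvan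
    refine ⟨N, σ ^ N, pow_mem hσmem N, ?_⟩
    rw [← mul_pow]
    exact hN
  · rintro ⟨N, s, hsmem, hsp⟩ a haA hane
    have hqzero : ∀ q ∈ Ideal.span A, eval a q = 0 := by
      intro q hq
      have : Ideal.span A ≤ RingHom.ker (eval a) := by
        rw [Ideal.span_le]
        intro x hx
        exact haA x hx
      exact this hq
    have hs : eval a s ≠ 0 := by
      refine Submonoid.closure_induction (fun x hx => hane x hx) ?_ ?_ hsmem
      · simp
      · intro x y _ _ hx hy
        rw [map_mul]; exact mul_ne_zero hx hy
    have := hqzero _ hsp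
    rw [map_mul, map_pow] at this
    rcases mul_eq_zero.mp this with h0 | h0
    · exact absurd h0 hs
    · rcases Nat.eq_zero_or_pos N with rfl | hNpos
      · simp at h0
      · exact pow_eq_zero_iff hNpos.ne' |>.mp h0
end

section
/- (Splitting, algebraic case) Let A ⊆ ℂ[x₁,…,xₙ], let S be a finite set of nonzero polynomials in ℂ[x₁,…,xₙ], and let h ∈ ℂ[x₁,…,xₙ] be nonzero. Then √((A) : S^∞) = √((A ∪ {h}) : S^∞) ∩ √((A) : (S ∪ {h})^∞). -/
/-!
Every element of the monoid generated by `S ∪ {h}` has the form `t hᵏ` with `t` in the monoid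
generated by `S`. If `s pᴺ ≡ r h` modulo `I` and `t hᵏ pᴹ ∈ I`, then raising the congruence to the
`k`-th power and multiplying by `t pᴹ` gives `t sᵏ p^(Nk+M) ≡ rᵏ (t hᵏ pᴹ) ≡ 0`, which puts `p`
in `√(I : S^∞)`.
-/

open MvPolynomial

/-- The radical of a set of polynomials: all p with p^N in the set for some N. -/
def radOfSet {n : ℕ} (J : Set (MvPolynomial (Fin n) ℂ)) : Set (MvPolynomial (Fin n) ℂ) :=
  {p | ∃ N : ℕ, p ^ N ∈ J}

theorem Submonoid.exists_mul_pow_eq_of_mem_closure_union_singleton {M : Type*} [CommMonoid M]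
    {S : Set M} {h x : M} (hx : x ∈ Submonoid.closure (S ∪ {h})) :
    ∃ s ∈ Submonoid.closure S, ∃ k : ℕ, s * h ^ k = x := by
  rw [Submonoid.closure_union, Submonoid.mem_sup] at hx
  obtain ⟨s, hs, y, hy, rfl⟩ := hx
  obtain ⟨k, rfl⟩ := Submonoid.mem_closure_singleton.mp hy
  exact ⟨s, hs, k, rfl⟩

theorem Ideal.mul_pow_mem_of_mem_sup_span_singleton {R : Type*} [CommRing R] {I : Ideal R}
    {a c h : R} {k : ℕ} (ha : a ∈ I ⊔ Ideal.span {h}) (hc : c * h ^ k ∈ I) :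
    c * a ^ k ∈ I := by
  rw [sup_comm, Ideal.mem_span_singleton_sup] at ha
  obtain ⟨r, b, hb, rfl⟩ := ha
  have hdiff : (r * h + b) ^ k - (r * h) ^ k ∈ I :=
    Ideal.mem_of_dvd _ (sub_dvd_pow_sub_pow _ _ k) (by simpa using hb)
  have hsplit : c * (r * h + b) ^ k
      = c * ((r * h + b) ^ k - (r * h) ^ k) + r ^ k * (c * h ^ k) := by ring
  rw [hsplit]
  exact add_mem (I.mul_mem_left c hdiff) (I.mul_mem_left _ hc)

section Saturation

variable {n : ℕ}

theorem radOfSet_satBySet_mono {I J : Ideal (MvPolynomial (Fin n) ℂ)}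
    {S T : Set (MvPolynomial (Fin n) ℂ)} (hIJ : I ≤ J) (hST : S ⊆ T) :
    radOfSet (satBySet I S) ⊆ radOfSet (satBySet J T) := by
  rintro p ⟨N, s, hs, hsp⟩
  exact ⟨N, s, Submonoid.closure_mono hST hs, hIJ hsp⟩

theorem radOfSet_satBySet_sup_inter_subset (I : Ideal (MvPolynomial (Fin n) ℂ))
    (S : Set (MvPolynomial (Fin n) ℂ)) (h : MvPolynomial (Fin n) ℂ) :
    radOfSet (satBySet (I ⊔ Ideal.span {h}) S) ∩ radOfSet (satBySet I (S ∪ {h}))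
      ⊆ radOfSet (satBySet I S) := by
  rintro p ⟨⟨N, s, hs, hsp⟩, ⟨M, t, ht, htp⟩⟩
  obtain ⟨s', hs', k, rfl⟩ := Submonoid.exists_mul_pow_eq_of_mem_closure_union_singleton ht
  have hmem : s' * p ^ M * (s * p ^ N) ^ k ∈ I :=
    Ideal.mul_pow_mem_of_mem_sup_span_singleton hsp (by simpa only [mul_right_comm] using htp)
  refine ⟨N * k + M, s' * s ^ k, mul_mem hs' (pow_mem hs k), ?_⟩
  convert hmem using 1
  ring

end Saturation

theorem stmt4_general (n : ℕ) (A : Set (MvPolynomial (Fin n) ℂ))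
    (S : Finset (MvPolynomial (Fin n) ℂ))
    (h : MvPolynomial (Fin n) ℂ) :
    radOfSet (satBySet (Ideal.span A) (↑S : Set (MvPolynomial (Fin n) ℂ))) =
      radOfSet (satBySet (Ideal.span (A ∪ {h})) (↑S : Set (MvPolynomial (Fin n) ℂ))) ∩
        radOfSet (satBySet (Ideal.span A) ((↑S : Set (MvPolynomial (Fin n) ℂ)) ∪ {h})) := by
  rw [Ideal.span_union]
  exact Set.Subset.antisymm
    (Set.subset_inter (radOfSet_satBySet_mono le_sup_left le_rfl)
      (radOfSet_satBySet_mono le_rfl Set.subset_union_left))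
    (radOfSet_satBySet_sup_inter_subset _ _ h)

/-- Splitting, algebraic case:
√((A) : S^∞) = √((A ∪ {h}) : S^∞) ∩ √((A) : (S ∪ {h})^∞). -/
theorem stmt4 (n : ℕ) (A : Set (MvPolynomial (Fin n) ℂ))
    (S : Finset (MvPolynomial (Fin n) ℂ)) (hS : (0 : MvPolynomial (Fin n) ℂ) ∉ S)
    (h : MvPolynomial (Fin n) ℂ) (hh : h ≠ 0) :
    radOfSet (satBySet (Ideal.span A) (↑S : Set (MvPolynomial (Fin n) ℂ))) =
      radOfSet (satBySet (Ideal.span (A ∪ {h})) (↑S : Set (MvPolynomial (Fin n) ℂ))) ∩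
        radOfSet (satBySet (Ideal.span A) ((↑S : Set (MvPolynomial (Fin n) ℂ)) ∪ {h})) :=
  stmt4_general n A S h
end

section
/- For any set A ⊆ ℝ[x₁,…,xₙ] there exists a finite set B ⊆ ℝ[x₁,…,xₙ] such that V_ℝ(A) = V_ℝ(B) and the complex variety V_ℂ(B) is totally real, i.e., V_ℂ(I_ℂ(V_ℂ(B) ∩ ℝⁿ)) = V_ℂ(B). -/
open MvPolynomial

/-- Coefficientwise inclusion of real polynomials into complex polynomials. -/
noncomputable def toComplexPoly {n : ℕ} (p : MvPolynomial (Fin n) ℝ) :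
    MvPolynomial (Fin n) ℂ :=
  MvPolynomial.map (algebraMap ℝ ℂ) p

/-- Coordinatewise inclusion ℝⁿ → ℂⁿ. -/
def embR {n : ℕ} (a : Fin n → ℝ) : Fin n → ℂ := fun i => (a i : ℂ)

/-- The real zero set of a set of real polynomials. -/
def zeroSetR {n : ℕ} (A : Set (MvPolynomial (Fin n) ℝ)) : Set (Fin n → ℝ) :=
  {a | ∀ p ∈ A, eval a p = 0}

/-- The complex zero set of a set of complex polynomials. -/
def zeroSetC {n : ℕ} (A : Set (MvPolynomial (Fin n) ℂ)) : Set (Fin n → ℂ) :=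
  {a | ∀ p ∈ A, eval a p = 0}

/-- The vanishing ideal (as a set) of a set of complex points. -/
def vanishingC {n : ℕ} (X : Set (Fin n → ℂ)) : Set (MvPolynomial (Fin n) ℂ) :=
  {p | ∀ a ∈ X, eval a p = 0}

lemma eval_embR {n : ℕ} (a : Fin n → ℝ) (p : MvPolynomial (Fin n) ℝ) :
    eval (embR a) (toComplexPoly p) = (eval a p : ℂ) := by
  rw [toComplexPoly, eval_map]
  rw [show ((eval a p : ℝ) : ℂ) = algebraMap ℝ ℂ (eval a p) from rfl, ← eval₂_id p,
    MvPolynomial.eval₂_comp_left (algebraMap ℝ ℂ) (RingHom.id ℝ) a p]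
  rfl

lemma span_vanish {n : ℕ} {k : Type*} [CommRing k] (z : Fin n → k)
    (S : Set (MvPolynomial (Fin n) k)) (h : ∀ p ∈ S, eval z p = 0) :
    ∀ p ∈ Ideal.span S, eval z p = 0 := by
  intro p hp
  have : Ideal.span S ≤ RingHom.ker (eval z) := Ideal.span_le.mpr h
  exact this hp

lemma decompose {n : ℕ} (q : MvPolynomial (Fin n) ℂ) :
    ∃ u v : MvPolynomial (Fin n) ℝ,
      q = toComplexPoly u + C Complex.I * toComplexPoly v := by
  induction q using MvPolynomial.induction_on with
  | C a =>
      refine ⟨C a.re, C a.im, ?_⟩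
      simp only [toComplexPoly, map_C]
      rw [← map_mul, ← map_add]
      congr 1
      simp [Complex.ext_iff]
  | add p q hp hq =>
      obtain ⟨u1, v1, h1⟩ := hp
      obtain ⟨u2, v2, h2⟩ := hq
      refine ⟨u1 + u2, v1 + v2, ?_⟩
      simp only [toComplexPoly, map_add] at *
      rw [h1, h2]; ring
  | mul_X p i hp =>
      obtain ⟨u, v, h⟩ := hp
      refine ⟨u * X i, v * X i, ?_⟩
      simp only [toComplexPoly, map_mul, map_X] at *
      rw [h]; ring

/-- For any A ⊆ ℝ[x₁,…,xₙ] there is a finite B ⊆ ℝ[x₁,…,xₙ] with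
V_ℝ(A) = V_ℝ(B) such that V_ℂ(B) is totally real, i.e.
V_ℂ(I_ℂ(V_ℂ(B) ∩ ℝⁿ)) = V_ℂ(B). -/
theorem stmt8 (n : ℕ) (A : Set (MvPolynomial (Fin n) ℝ)) :
    ∃ B : Finset (MvPolynomial (Fin n) ℝ),
      zeroSetR A = zeroSetR (↑B : Set (MvPolynomial (Fin n) ℝ)) ∧
      zeroSetC (vanishingC
          (zeroSetC (toComplexPoly '' (↑B : Set (MvPolynomial (Fin n) ℝ))) ∩
            Set.range (embR (n := n)))) =
        zeroSetC (toComplexPoly '' (↑B : Set (MvPolynomial (Fin n) ℝ))) := by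
  set J : Ideal (MvPolynomial (Fin n) ℝ) := vanishingIdeal ℝ (zeroSetR A) with hJ
  obtain ⟨B, hB⟩ : J.FG := IsNoetherian.noetherian J
  refine ⟨B, ?_, ?_⟩
  · -- zeroSetR A = zeroSetR B
    ext a
    constructor
    · intro ha p hp
      have hpJ : p ∈ J := hB ▸ Ideal.subset_span hp
      exact hpJ a ha
    · intro ha p hp
      have hpJ : p ∈ J := by
        rw [hJ, mem_vanishingIdeal_iff]
        intro x hx; exact hx p hp
      exact span_vanish a (↑B : Set _) (fun q hq => ha q hq) p (hB ▸ hpJ)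
  · -- totally real
    have hreal : ∀ a : Fin n → ℝ, a ∈ zeroSetR (↑B : Set _) →
        embR a ∈ zeroSetC (toComplexPoly '' (↑B : Set _)) := by
      intro a ha q hq
      obtain ⟨p, hp, rfl⟩ := hq
      rw [eval_embR, ha p hp]
      simp
    ext z
    constructor
    · intro hz q hq
      obtain ⟨p, hp, rfl⟩ := hq
      apply hz
      intro w hw
      obtain ⟨hw1, a, rfl⟩ := hw
      exact hw1 _ ⟨p, hp, rfl⟩
    · intro hz q hq
      obtain ⟨u, v, rfl⟩ := decompose q
      -- u, v vanish on zeroSetR A hence in J = span B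
      have huv : u ∈ J ∧ v ∈ J := by
        constructor <;> rw [hJ, mem_vanishingIdeal_iff] <;> intro x hx
        · have hx' : x ∈ zeroSetR (↑B : Set _) := by
            intro p hp
            have hpJ : p ∈ J := hB ▸ Ideal.subset_span hp
            exact hpJ x hx
          have := hq (embR x) ⟨hreal x hx', ⟨x, rfl⟩⟩
          simp only [map_add, map_mul, eval_C, eval_embR] at this
          have hre := congrArg Complex.re this
          simpa using hre
        · have hx' : x ∈ zeroSetR (↑B : Set _) := by
            intro p hp
            have hpJ : p ∈ J := hB ▸ Ideal.subset_span hp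
            exact hpJ x hx
          have := hq (embR x) ⟨hreal x hx', ⟨x, rfl⟩⟩
          simp only [map_add, map_mul, eval_C, eval_embR] at this
          have him := congrArg Complex.im this
          simpa using him
      -- elements of span B are killed at z after complexification
      have hkill : ∀ p ∈ Ideal.span (↑B : Set _), eval z (toComplexPoly p) = 0 := by
        intro p hp
        have : Ideal.span (↑B : Set (MvPolynomial (Fin n) ℝ)) ≤
            RingHom.ker ((eval z).comp (MvPolynomial.map (algebraMap ℝ ℂ))) := by
          rw [Ideal.span_le]
          intro b hb
          have := hz (toComplexPoly b) ⟨b, hb, rfl⟩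
          simpa [RingHom.mem_ker, toComplexPoly] using this
        exact this hp
      have hu := hkill u (hB ▸ huv.1)
      have hv := hkill v (hB ▸ huv.2)
      simp [map_add, map_mul, eval_C, hu, hv]
end

section
/- Fix a polynomial vector field x' = f(x) with f₁,…,fₙ ∈ ℝ[x₁,…,xₙ] and let X = V_ℝ(p₁,…,p_m) for p₁,…,p_m ∈ ℝ[x₁,…,xₙ]. If the Lie derivative L(p_i) belongs to the ideal (p₁,…,p_m) for all 1 ≤ i ≤ m, then X is invariant with respect to x' = f(x). -/
open MvPolynomial

/-- The Lie derivative of a polynomial p with respect to the polynomial vector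
field x' = f(x): L(p) = Σᵢ (∂p/∂xᵢ)·fᵢ. -/
noncomputable def lieDeriv {n : ℕ} (f : Fin n → MvPolynomial (Fin n) ℝ)
    (p : MvPolynomial (Fin n) ℝ) : MvPolynomial (Fin n) ℝ :=
  ∑ i, pderiv i p * f i

/-- Invariance of a set of real points under the flow of x' = f(x). -/
def IsInvariantSet {n : ℕ} (f : Fin n → MvPolynomial (Fin n) ℝ)
    (X : Set (Fin n → ℝ)) : Prop :=
  ∀ x₀ ∈ X, ∀ D : Set ℝ, IsOpen D → D.OrdConnected → (0 : ℝ) ∈ D →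
    ∀ φ : ℝ → (Fin n → ℝ), φ 0 = x₀ →
      (∀ t ∈ D, HasDerivAt φ (fun i => eval (φ t) (f i)) t) →
      ∀ t ∈ D, 0 ≤ t → φ t ∈ X

lemma lieDeriv_add {n : ℕ} (f : Fin n → MvPolynomial (Fin n) ℝ)
    (a b : MvPolynomial (Fin n) ℝ) :
    lieDeriv f (a + b) = lieDeriv f a + lieDeriv f b := by
  simp [lieDeriv, add_mul, Finset.sum_add_distrib]

lemma lieDeriv_C {n : ℕ} (f : Fin n → MvPolynomial (Fin n) ℝ) (c : ℝ) :
    lieDeriv f (C c) = 0 := by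
  simp [lieDeriv, pderiv_C]

lemma lieDeriv_mul {n : ℕ} (f : Fin n → MvPolynomial (Fin n) ℝ)
    (a b : MvPolynomial (Fin n) ℝ) :
    lieDeriv f (a * b) = lieDeriv f a * b + a * lieDeriv f b := by
  simp only [lieDeriv, pderiv_mul, add_mul, Finset.sum_add_distrib]
  congr 1
  · rw [Finset.sum_mul]; exact Finset.sum_congr rfl fun i _ => by ring
  · rw [Finset.mul_sum]; exact Finset.sum_congr rfl fun i _ => by ring

lemma lieDeriv_X {n : ℕ} (f : Fin n → MvPolynomial (Fin n) ℝ) (i : Fin n) :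
    lieDeriv f (X i) = f i := by
  classical
  simp only [lieDeriv, pderiv_X]
  rw [Finset.sum_eq_single i] <;> simp (config := {contextual := true}) [Pi.single_apply, eq_comm]

lemma hasDerivAt_eval_comp {n : ℕ} (f : Fin n → MvPolynomial (Fin n) ℝ)
    (φ : ℝ → Fin n → ℝ) (s : ℝ)
    (hφ : HasDerivAt φ (fun i => eval (φ s) (f i)) s)
    (q : MvPolynomial (Fin n) ℝ) :
    HasDerivAt (fun u => eval (φ u) q) (eval (φ s) (lieDeriv f q)) s := by
  induction q using MvPolynomial.induction_on with
  | C a => simpa [lieDeriv_C] using hasDerivAt_const s (a : ℝ)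
  | add a b ha hb =>
      rw [lieDeriv_add, map_add]; simp only [map_add]; exact ha.add hb
  | mul_X q i hq =>
      have hx : HasDerivAt (fun u => φ u i) (eval (φ s) (f i)) s := by
        have := ((ContinuousLinearMap.proj i :
          (Fin n → ℝ) →L[ℝ] ℝ).hasFDerivAt).comp_hasDerivAt s hφ
        exact this
      have := hq.mul hx
      have hfun : (fun u => eval (φ u) (q * X i)) = fun u => eval (φ u) q * φ u i := by
        funext u; rw [map_mul, eval_X]
      rw [hfun, lieDeriv_mul, lieDeriv_X, map_add, map_mul, map_mul, eval_X]
      exact this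

/-- If the Lie derivative of each pᵢ lies in the ideal (p₁,…,p_m),
then X = V_ℝ(p₁,…,p_m) is invariant with respect to x' = f(x). -/
theorem stmt11 (n m : ℕ) (f : Fin n → MvPolynomial (Fin n) ℝ)
    (p : Fin m → MvPolynomial (Fin n) ℝ)
    (h : ∀ i : Fin m, lieDeriv f (p i) ∈ Ideal.span (Set.range p)) :
    IsInvariantSet f (zeroSetR (Set.range p)) := by
  classical
  intro x₀ hx₀ D hD hDc hD0 φ hφ0 hφ' t htD ht0
  have hIcc : Set.Icc (0:ℝ) t ⊆ D := hDc.out hD0 htD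
  -- coefficients
  choose q hq using fun i => (Submodule.mem_span_range_iff_exists_fun _).mp (h i)
  -- g
  set g : ℝ → Fin m → ℝ := fun s i => eval (φ s) (p i) with hgdef
  have hderiv : ∀ s ∈ D, ∀ i, HasDerivAt (fun u => g u i)
      (∑ j, eval (φ s) (q i j) * g s j) s := by
    intro s hs i
    have := hasDerivAt_eval_comp f φ s (hφ' s hs) (p i)
    have heq : eval (φ s) (lieDeriv f (p i)) = ∑ j, eval (φ s) (q i j) * g s j := by
      rw [← hq i]
      simp [smul_eq_mul, hgdef]
    rw [heq] at this
    exact this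
  have hcont : ∀ r : MvPolynomial (Fin n) ℝ,
      ContinuousOn (fun s => eval (φ s) r) (Set.Icc (0:ℝ) t) := by
    intro r s hs
    exact ((hasDerivAt_eval_comp f φ s (hφ' s (hIcc hs)) r)).continuousAt.continuousWithinAt
  -- bound on coefficients
  set B : ℝ → ℝ := fun s => ∑ i : Fin m, ∑ j : Fin m, |eval (φ s) (q i j)| with hBdef
  have hBcont : ContinuousOn B (Set.Icc (0:ℝ) t) := by
    apply continuousOn_finset_sum
    intro i _
    apply continuousOn_finset_sum
    intro j _
    exact (hcont (q i j)).abs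
  obtain ⟨Cb, hCb⟩ := (isCompact_Icc).exists_bound_of_continuousOn hBcont
  set K : NNReal := Real.toNNReal Cb with hKdef
  -- vector field
  set π : ℝ → ℝ := fun s => ((Set.projIcc (0:ℝ) t ht0 s : Set.Icc (0:ℝ) t) : ℝ) with hπdef
  have hπmem : ∀ s, π s ∈ Set.Icc (0:ℝ) t := fun s => (Set.projIcc (0:ℝ) t ht0 s).2
  set v : ℝ → (Fin m → ℝ) → (Fin m → ℝ) :=
    fun s y i => ∑ j, eval (φ (π s)) (q i j) * y j with hvdef
  have hlip : ∀ s, LipschitzWith K (v s) := by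
    intro s
    apply LipschitzWith.of_dist_le_mul
    intro y z
    rw [dist_pi_le_iff (by positivity)]
    intro i
    have h1 : dist (v s y i) (v s z i) = |∑ j, eval (φ (π s)) (q i j) * (y j - z j)| := by
      simp [hvdef, Real.dist_eq, ← Finset.sum_sub_distrib, mul_sub]
    rw [h1]
    calc |∑ j, eval (φ (π s)) (q i j) * (y j - z j)|
        ≤ ∑ j, |eval (φ (π s)) (q i j)| * |y j - z j| := by
          refine (Finset.abs_sum_le_sum_abs _ _).trans ?_
          simp [abs_mul]
      _ ≤ ∑ j, |eval (φ (π s)) (q i j)| * dist y z := by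
          apply Finset.sum_le_sum
          intro j _
          exact mul_le_mul_of_nonneg_left (by rw [Real.dist_eq] at *; exact (dist_le_pi_dist y z j).trans_eq rfl |>.trans_eq rfl) (abs_nonneg _)
      _ = (∑ j, |eval (φ (π s)) (q i j)|) * dist y z := by rw [Finset.sum_mul]
      _ ≤ (K : ℝ) * dist y z := by
          apply mul_le_mul_of_nonneg_right _ dist_nonneg
          calc (∑ j, |eval (φ (π s)) (q i j)|)
              ≤ B (π s) := Finset.single_le_sum (f := fun i => ∑ j, |eval (φ (π s)) (q i j)|)
                (fun k _ => Finset.sum_nonneg fun j _ => abs_nonneg _) (Finset.mem_univ i)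
            _ ≤ ‖B (π s)‖ := le_abs_self _
            _ ≤ Cb := hCb _ (hπmem s)
            _ ≤ K := Real.le_coe_toNNReal Cb
  -- ODE uniqueness
  have hgc : ContinuousOn g (Set.Icc (0:ℝ) t) := by
    apply continuousOn_pi.mpr
    intro i
    exact hcont (p i)
  have hg' : ∀ s ∈ Set.Ico (0:ℝ) t, HasDerivWithinAt g (v s (g s)) (Set.Ici s) s := by
    intro s hs
    have hsIcc : s ∈ Set.Icc (0:ℝ) t := Set.mem_Icc_of_Ico hs
    have hπs : π s = s := by
      simp only [hπdef]
      rw [Set.projIcc_of_mem ht0 hsIcc]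
    have : HasDerivAt g (v s (g s)) s := by
      apply hasDerivAt_pi.mpr
      intro i
      have := hderiv s (hIcc hsIcc) i
      simpa [hvdef, hπs] using this
    exact this.hasDerivWithinAt
  have hzc : ContinuousOn (fun _ : ℝ => (0 : Fin m → ℝ)) (Set.Icc (0:ℝ) t) :=
    continuousOn_const
  have hz' : ∀ s ∈ Set.Ico (0:ℝ) t,
      HasDerivWithinAt (fun _ : ℝ => (0 : Fin m → ℝ)) (v s 0) (Set.Ici s) s := by
    intro s hs
    have : v s 0 = 0 := by
      funext i
      simp [hvdef]
    rw [this]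
    exact (hasDerivAt_const s _).hasDerivWithinAt
  have hg0 : g 0 = 0 := by
    funext i
    simp only [hgdef, hφ0]
    exact hx₀ (p i) ⟨i, rfl⟩
  have := ODE_solution_unique hlip hgc hg' hzc hz' hg0 (Set.right_mem_Icc.mpr ht0)
  intro r hr
  obtain ⟨i, rfl⟩ := hr
  have := congrFun this i
  simpa [hgdef] using this
end

section
/- Fix a polynomial vector field x' = f(x) with f₁,…,fₙ ∈ ℝ[x₁,…,xₙ]. If I is an ideal of ℝ[x₁,…,xₙ] such that L(p) ∈ I for all p ∈ I, then the real radical ℝ-rad(I) also satisfies L(p) ∈ ℝ-rad(I) for all p ∈ ℝ-rad(I). -/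
open MvPolynomial

/-- The real radical of an ideal I of ℝ[x₁,…,xₙ]: all p such that
p^{2m} + g₁² + … + g_s² ∈ I for some m and polynomials g₁,…,g_s. -/
def realRadical {n : ℕ} (I : Ideal (MvPolynomial (Fin n) ℝ)) :
    Set (MvPolynomial (Fin n) ℝ) :=
  {p | ∃ (m s : ℕ) (g : Fin s → MvPolynomial (Fin n) ℝ),
    p ^ (2 * m) + ∑ i, (g i) ^ 2 ∈ I}

namespace Stmt12Aux

open Finset Function

variable {n : ℕ} (f : Fin n → MvPolynomial (Fin n) ℝ)

local notation "R" => MvPolynomial (Fin n) ℝ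

theorem D_add (p q : R) : lieDeriv f (p + q) = lieDeriv f p + lieDeriv f q := by
  simp [lieDeriv, add_mul, Finset.sum_add_distrib]

theorem D_zero : lieDeriv f 0 = 0 := by simp [lieDeriv]

theorem D_mul (p q : R) :
    lieDeriv f (p * q) = lieDeriv f p * q + p * lieDeriv f q := by
  unfold lieDeriv
  simp only [pderiv_mul, add_mul, Finset.sum_add_distrib, Finset.sum_mul, Finset.mul_sum]
  congr 1
  · exact Finset.sum_congr rfl fun i _ => by ring
  · exact Finset.sum_congr rfl fun i _ => by ring

theorem D_nsmul (c : ℕ) (p : R) : lieDeriv f (c • p) = c • lieDeriv f p := by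
  simp [lieDeriv, smul_mul_assoc, Finset.smul_sum, mul_assoc]

theorem D_sum {ι : Type*} (t : Finset ι) (h : ι → R) :
    lieDeriv f (∑ i ∈ t, h i) = ∑ i ∈ t, lieDeriv f (h i) := by
  induction t using Finset.cons_induction with
  | empty => simp [D_zero]
  | cons a t ha ih => simp [Finset.sum_cons, D_add, ih]

theorem iterD_add (k : ℕ) (p q : R) :
    (lieDeriv f)^[k] (p + q) = (lieDeriv f)^[k] p + (lieDeriv f)^[k] q := by
  induction k generalizing p q with
  | zero => simp
  | succ k ih => simp [iterate_succ_apply, D_add, ih]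

theorem iterD_sum {ι : Type*} (k : ℕ) (t : Finset ι) (h : ι → R) :
    (lieDeriv f)^[k] (∑ i ∈ t, h i) = ∑ i ∈ t, (lieDeriv f)^[k] (h i) := by
  induction k generalizing h with
  | zero => simp
  | succ k ih => simp [iterate_succ_apply, D_sum, ih]

theorem iterD_mul (m : ℕ) (p q : R) :
    (lieDeriv f)^[m] (p * q) =
      ∑ k ∈ range m.succ,
        (m.choose k • ((lieDeriv f)^[m - k] p * (lieDeriv f)^[k] q)) := by
  induction m with
  | zero => simp [Finset.range]
  | succ m IH =>
    calc
      (lieDeriv f)^[m + 1] (p * q) =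
          lieDeriv f (∑ k ∈ range m.succ,
              m.choose k • ((lieDeriv f)^[m - k] p * (lieDeriv f)^[k] q)) := by
        rw [Function.iterate_succ_apply', IH]
      _ = (∑ k ∈ range m.succ,
            m.choose k • ((lieDeriv f)^[m - k + 1] p * (lieDeriv f)^[k] q)) +
          ∑ k ∈ range m.succ,
            m.choose k • ((lieDeriv f)^[m - k] p * (lieDeriv f)^[k + 1] q) := by
        simp_rw [D_sum, D_nsmul, D_mul, Function.iterate_succ_apply', smul_add,
          sum_add_distrib]
      _ = (∑ k ∈ range m.succ,
                m.choose k.succ • ((lieDeriv f)^[m - k] p * (lieDeriv f)^[k + 1] q)) +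
              1 • ((lieDeriv f)^[m + 1] p * (lieDeriv f)^[0] q) +
            ∑ k ∈ range m.succ,
              m.choose k • ((lieDeriv f)^[m - k] p * (lieDeriv f)^[k + 1] q) := ?_
      _ = ((∑ k ∈ range m.succ,
              m.choose k • ((lieDeriv f)^[m - k] p * (lieDeriv f)^[k + 1] q)) +
              ∑ k ∈ range m.succ,
                m.choose k.succ • ((lieDeriv f)^[m - k] p * (lieDeriv f)^[k + 1] q)) +
            1 • ((lieDeriv f)^[m + 1] p * (lieDeriv f)^[0] q) := by
        rw [add_comm, add_assoc]
      _ = (∑ i ∈ range m.succ,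
              (m + 1).choose (i + 1) •
                ((lieDeriv f)^[m + 1 - (i + 1)] p * (lieDeriv f)^[i + 1] q)) +
            1 • ((lieDeriv f)^[m + 1] p * (lieDeriv f)^[0] q) := by
        simp_rw [Nat.choose_succ_succ, Nat.succ_sub_succ, add_smul, sum_add_distrib]
      _ = ∑ k ∈ range m.succ.succ,
            m.succ.choose k • ((lieDeriv f)^[m.succ - k] p * (lieDeriv f)^[k] q) := by
        rw [sum_range_succ' _ m.succ, Nat.choose_zero_right, tsub_zero]
    congr
    refine (sum_range_succ' _ _).trans (congr_arg₂ (· + ·) ?_ ?_)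
    · rw [sum_range_succ, Nat.choose_succ_self, zero_smul, add_zero]
      refine sum_congr rfl fun k hk => ?_
      rw [mem_range] at hk
      congr
      omega
    · rw [Nat.choose_zero_right, tsub_zero]


section SOS

variable {A : Type*} [CommRing A]

theorem sosMulSelf (x : A) : IsSumSq (x * x) := by
  simpa using IsSumSq.sq_add x 0 IsSumSq.zero

theorem sosMulSelfMul {s : A} (h : IsSumSq s) (x : A) : IsSumSq (x * x * s) := by
  induction h with
  | zero => simpa using IsSumSq.zero
  | @sq_add a S hS ih =>
      have : x * x * (a * a + S) = (x * a) * (x * a) + x * x * S := by ring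
      rw [this]
      exact IsSumSq.sq_add _ ih

theorem sosMul {s t : A} (hs : IsSumSq s) (ht : IsSumSq t) : IsSumSq (s * t) := by
  induction hs with
  | zero => simpa using IsSumSq.zero
  | @sq_add a S hS ih =>
      have : (a * a + S) * t = a * a * t + S * t := by ring
      rw [this]
      exact (sosMulSelfMul ht a).add ih

theorem isSumSq_pow_mul {a : A} (m : ℕ) {s : A} (hs : IsSumSq s) :
    IsSumSq (a ^ (2 * m) * s) := by
  have : a ^ (2 * m) * s = (a ^ m) * (a ^ m) * s := by rw [two_mul, pow_add]
  rw [this]; exact sosMulSelfMul hs _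

theorem isSumSq_sum_sq {ι : Type*} (t : Finset ι) (g : ι → A) :
    IsSumSq (∑ i ∈ t, g i ^ 2) := by
  have : ∀ i, g i ^ 2 = g i * g i := fun i => sq (g i)
  simp only [this]
  exact IsSumSq.sum_mul_self t g

theorem isSumSq_exists_fin {σ : A} (h : IsSumSq σ) :
    ∃ (s : ℕ) (g : Fin s → A), σ = ∑ i, g i ^ 2 := by
  induction h with
  | zero => exact ⟨0, ![], by simp⟩
  | @sq_add a S hS ih =>
      obtain ⟨s, g, rfl⟩ := ih
      exact ⟨s + 1, Fin.cons a g, by simp [Fin.sum_univ_succ, sq]⟩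

end SOS


/-- A real ideal: `x² + (sum of squares) ∈ P → x ∈ P`. -/
def IsRealIdeal (P : Ideal R) : Prop :=
  ∀ x σ : R, IsSumSq σ → x ^ 2 + σ ∈ P → x ∈ P

theorem nsmul_mem_cancel {P : Ideal R} {x : R} {c : ℕ} (hc : c ≠ 0)
    (h : c • x ∈ P) : x ∈ P := by
  have hx : x = MvPolynomial.C ((c : ℝ)⁻¹) * (c • x) := by
    rw [← MvPolynomial.smul_eq_C_mul, ← Nat.cast_smul_eq_nsmul ℝ c x, smul_smul,
      inv_mul_cancel₀ (by exact_mod_cast hc), one_smul]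
  rw [hx]
  exact Ideal.mul_mem_left _ _ h

/-- Zorn separation: abstract real Nullstellensatz direction. -/
theorem exists_real_prime {I : Ideal R} {a : R} (ha : a ∉ realRadical I) :
    ∃ P : Ideal R, I ≤ P ∧ P.IsPrime ∧ IsRealIdeal P ∧ a ∉ P := by
  classical
  set s : Set (Ideal R) :=
    {J | I ≤ J ∧ ∀ (m : ℕ) (σ : R), IsSumSq σ → a ^ (2 * m) + σ ∉ J} with hs
  have hIs : I ∈ s := by
    refine ⟨le_rfl, fun m σ hσ hmem => ha ?_⟩
    obtain ⟨t, g, rfl⟩ := isSumSq_exists_fin hσ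
    exact ⟨m, t, g, hmem⟩
  obtain ⟨P, hIP, hPs, hPmax⟩ :
      ∃ P, I ≤ P ∧ P ∈ s ∧ ∀ z ∈ s, P ≤ z → z ≤ P := by
    obtain ⟨P, hIP, hmax⟩ := zorn_le_nonempty₀ s (fun c hcs hchain y hy => by
      refine ⟨sSup c, ⟨?_, ?_⟩, fun z hz => le_sSup hz⟩
      · exact le_trans (hcs hy).1 (le_sSup hy)
      · intro m σ hσ hmem
        obtain ⟨J, hJc, hJ⟩ :=
          (Submodule.mem_sSup_of_directed ⟨y, hy⟩ hchain.directedOn).1 hmem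
        exact (hcs hJc).2 m σ hσ hJ) I hIs
    exact ⟨P, hIP, hmax.1, fun z hz hPz => hmax.2 hz hPz⟩
  -- key: enlarging P captures some a^(2m) + σ
  have key : ∀ x : R, x ∉ P → ∃ (m : ℕ) (σ r j : R),
      IsSumSq σ ∧ j ∈ P ∧ a ^ (2 * m) + σ = r * x + j := by
    intro x hx
    have hnot : Ideal.span {x} ⊔ P ∉ s := by
      intro hmem
      have hle : Ideal.span {x} ⊔ P ≤ P :=
        hPmax _ hmem (le_sup_right)
      exact hx (hle (le_sup_left (a := Ideal.span {x})
        (Ideal.subset_span (Set.mem_singleton x))))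
    have hI' : I ≤ Ideal.span {x} ⊔ P := le_trans hIP le_sup_right
    simp only [hs, Set.mem_setOf_eq, not_and, not_forall, not_not] at hnot
    obtain ⟨m, σ, hσ, hmem⟩ := hnot hI'
    obtain ⟨r, j, hj, hrj⟩ := Ideal.mem_span_singleton_sup.1 hmem
    exact ⟨m, σ, r, j, hσ, hj, hrj.symm⟩
  have hPne : (1 : R) ∉ P := by
    intro h1
    exact hPs.2 0 0 IsSumSq.zero (by simpa using h1)
  refine ⟨P, hIP, ?_, ?_, ?_⟩
  · -- prime
    refine ⟨fun htop => hPne (htop ▸ Submodule.mem_top), ?_⟩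
    intro x y hxy
    by_contra hcon
    push_neg at hcon
    obtain ⟨hx, hy⟩ := hcon
    obtain ⟨m₁, σ₁, r₁, j₁, hσ₁, hj₁, e₁⟩ := key x hx
    obtain ⟨m₂, σ₂, r₂, j₂, hσ₂, hj₂, e₂⟩ := key y hy
    have hσ : IsSumSq (a ^ (2 * m₁) * σ₂ + (a ^ (2 * m₂) * σ₁ + σ₁ * σ₂)) :=
      (isSumSq_pow_mul m₁ hσ₂).add ((isSumSq_pow_mul m₂ hσ₁).add (sosMul hσ₁ hσ₂))
    apply hPs.2 (m₁ + m₂) _ hσ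
    have heq : a ^ (2 * (m₁ + m₂)) + (a ^ (2 * m₁) * σ₂ + (a ^ (2 * m₂) * σ₁ + σ₁ * σ₂))
        = (a ^ (2 * m₁) + σ₁) * (a ^ (2 * m₂) + σ₂) := by ring
    rw [heq, e₁, e₂]
    have : (r₁ * x + j₁) * (r₂ * y + j₂)
        = (r₁ * r₂) * (x * y) + (r₁ * x * j₂ + j₁ * (r₂ * y + j₂)) := by ring
    rw [this]
    exact Ideal.add_mem _ (Ideal.mul_mem_left _ _ hxy)
      (Ideal.add_mem _ (Ideal.mul_mem_left _ _ hj₂) (Ideal.mul_mem_right _ _ hj₁))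
  · -- real
    intro x σ hσ hx2
    by_contra hx
    obtain ⟨m₁, σ₁, r, j, hσ₁, hj, e₁⟩ := key x hx
    set σ' : R := a ^ (2 * m₁) * σ₁ + (a ^ (2 * m₁) * σ₁ + (σ₁ * σ₁ + r * r * σ)) with hσ'def
    have hσ' : IsSumSq σ' :=
      (isSumSq_pow_mul m₁ hσ₁).add ((isSumSq_pow_mul m₁ hσ₁).add
        ((sosMul hσ₁ hσ₁).add (sosMulSelfMul hσ r)))
    apply hPs.2 (2 * m₁) σ' hσ'
    have heq : a ^ (2 * (2 * m₁)) + σ' = (a ^ (2 * m₁) + σ₁) ^ 2 + r * r * σ := by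
      rw [hσ'def]; ring
    rw [heq, e₁]
    have : (r * x + j) ^ 2 + r * r * σ
        = (r * r) * (x ^ 2 + σ) + j * (j + 2 * (r * x)) := by ring
    rw [this]
    exact Ideal.add_mem _ (Ideal.mul_mem_left _ _ hx2) (Ideal.mul_mem_right _ _ hj)
  · -- a ∉ P
    intro haP
    exact hPs.2 1 0 IsSumSq.zero (by
      simpa using Ideal.pow_mem_of_mem P haP 2 (by norm_num))


end Stmt12Aux

section Part3

namespace Stmt12Aux

open Finset Function

variable {n : ℕ} (f : Fin n → MvPolynomial (Fin n) ℝ)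

local notation "R" => MvPolynomial (Fin n) ℝ

theorem iterMem_mul_right {P : Ideal R} (hP : P.IsPrime) {x y : R}
    (hxy : ∀ k, (lieDeriv f)^[k] (x * y) ∈ P)
    (hx : ¬ ∀ k, (lieDeriv f)^[k] x ∈ P) :
    ∀ k, (lieDeriv f)^[k] y ∈ P := by
  classical
  push_neg at hx
  have hex : ∃ i, (lieDeriv f)^[i] x ∉ P := hx
  set i := Nat.find hex with hidef
  have hi : (lieDeriv f)^[i] x ∉ P := Nat.find_spec hex
  have hmin : ∀ j < i, (lieDeriv f)^[j] x ∈ P := fun j hj =>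
    not_not.1 (Nat.find_min hex hj)
  intro k
  induction k using Nat.strong_induction_on with
  | _ k IH =>
    have h1 := hxy (i + k)
    rw [iterD_mul] at h1
    have hk_mem : k ∈ range (i + k + 1) := by
      rw [Finset.mem_range]; omega
    have herase : ∑ j ∈ (range (i + k + 1)).erase k,
        (i + k).choose j • ((lieDeriv f)^[i + k - j] x * (lieDeriv f)^[j] y) ∈ P := by
      refine Ideal.sum_mem _ fun j hj => ?_
      rw [Finset.mem_erase, Finset.mem_range] at hj
      obtain ⟨hjk, hjlt⟩ := hj
      rw [nsmul_eq_mul]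
      rcases lt_or_gt_of_ne hjk with h | h
      · exact Ideal.mul_mem_left _ _ (Ideal.mul_mem_left _ _ (IH j h))
      · exact Ideal.mul_mem_left _ _
          (Ideal.mul_mem_right _ _ (hmin _ (by omega)))
    have hFk : (i + k).choose k • ((lieDeriv f)^[i + k - k] x * (lieDeriv f)^[k] y) ∈ P := by
      have h4 := P.sub_mem h1 herase
      rw [← Finset.add_sum_erase _ _ hk_mem, add_sub_cancel_right] at h4
      exact h4
    have h5 : (i + k).choose k • ((lieDeriv f)^[i] x * (lieDeriv f)^[k] y) ∈ P := by
      simpa [Nat.add_sub_cancel] using hFk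
    have h6 : (lieDeriv f)^[i] x * (lieDeriv f)^[k] y ∈ P :=
      nsmul_mem_cancel (Nat.choose_pos (Nat.le_add_left k i)).ne' h5
    rcases hP.mem_or_mem h6 with h | h
    · exact absurd h hi
    · exact h

theorem iterMem_real {P : Ideal R} (hPr : IsRealIdeal P) {s : ℕ} (c : Fin s → R)
    (hc : ∀ k, (lieDeriv f)^[k] (∑ i, c i ^ 2) ∈ P) :
    ∀ (k : ℕ) (i : Fin s), (lieDeriv f)^[k] (c i) ∈ P := by
  intro k
  induction k using Nat.strong_induction_on with
  | _ k IH =>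
    have h1 := hc (2 * k)
    rw [iterD_sum] at h1
    have hk_mem : k ∈ range (2 * k + 1) := by rw [Finset.mem_range]; omega
    have hrw : ∀ i : Fin s, (lieDeriv f)^[2 * k] (c i ^ 2) =
        (2 * k).choose k • ((lieDeriv f)^[2 * k - k] (c i) * (lieDeriv f)^[k] (c i)) +
        ∑ j ∈ (range (2 * k + 1)).erase k,
          (2 * k).choose j • ((lieDeriv f)^[2 * k - j] (c i) * (lieDeriv f)^[j] (c i)) := by
      intro i
      rw [sq, iterD_mul, ← Finset.add_sum_erase _ _ hk_mem]
    rw [Finset.sum_congr rfl (fun i _ => hrw i), Finset.sum_add_distrib] at h1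
    have herase : ∑ i : Fin s, ∑ j ∈ (range (2 * k + 1)).erase k,
        (2 * k).choose j • ((lieDeriv f)^[2 * k - j] (c i) * (lieDeriv f)^[j] (c i)) ∈ P := by
      refine Ideal.sum_mem _ fun i _ => Ideal.sum_mem _ fun j hj => ?_
      rw [Finset.mem_erase, Finset.mem_range] at hj
      obtain ⟨hjk, hjlt⟩ := hj
      rw [nsmul_eq_mul]
      rcases lt_or_gt_of_ne hjk with h | h
      · exact Ideal.mul_mem_left _ _ (Ideal.mul_mem_left _ _ (IH j h i))
      · exact Ideal.mul_mem_left _ _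
          (Ideal.mul_mem_right _ _ (IH (2 * k - j) (by omega) i))
    have hdist : ∑ i : Fin s,
        (2 * k).choose k • ((lieDeriv f)^[2 * k - k] (c i) * (lieDeriv f)^[k] (c i)) ∈ P := by
      have h4 := P.sub_mem h1 herase
      simpa using h4
    rw [← Finset.smul_sum] at hdist
    have hsum : ∑ i : Fin s,
        ((lieDeriv f)^[2 * k - k] (c i) * (lieDeriv f)^[k] (c i)) ∈ P :=
      nsmul_mem_cancel (Nat.choose_pos (by omega)).ne' hdist
    have h2k : 2 * k - k = k := by omega
    rw [h2k] at hsum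
    intro i
    refine hPr ((lieDeriv f)^[k] (c i))
      (∑ i' ∈ univ.erase i, ((lieDeriv f)^[k] (c i') * (lieDeriv f)^[k] (c i')))
      (IsSumSq.sum_mul_self _ _) ?_
    have hEq : (lieDeriv f)^[k] (c i) ^ 2 +
        ∑ i' ∈ univ.erase i, ((lieDeriv f)^[k] (c i') * (lieDeriv f)^[k] (c i'))
        = ∑ i' : Fin s, ((lieDeriv f)^[k] (c i') * (lieDeriv f)^[k] (c i')) := by
      rw [sq]
      exact Finset.add_sum_erase _
        (fun i' => (lieDeriv f)^[k] (c i') * (lieDeriv f)^[k] (c i')) (Finset.mem_univ i)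
    rw [hEq]
    exact hsum

theorem iter_mem_I {I : Ideal R} (hI : ∀ p ∈ I, lieDeriv f p ∈ I) :
    ∀ (k : ℕ) (q : R), q ∈ I → (lieDeriv f)^[k] q ∈ I := by
  intro k
  induction k with
  | zero => exact fun q hq => hq
  | succ k ih =>
    intro q hq
    rw [iterate_succ_apply]
    exact ih _ (hI q hq)

theorem pow_iterMem {P : Ideal R} (hP : P.IsPrime) {x : R} :
    ∀ j : ℕ, j ≠ 0 → (∀ k, (lieDeriv f)^[k] (x ^ j) ∈ P) →
      ∀ k, (lieDeriv f)^[k] x ∈ P := by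
  intro j
  induction j with
  | zero => intro h; exact absurd rfl h
  | succ j ih =>
    intro _ h
    by_cases hx : ∀ k, (lieDeriv f)^[k] x ∈ P
    · exact hx
    · rcases Nat.eq_zero_or_pos j with rfl | hj
      · intro k; simpa using h k
      · have h' : ∀ k, (lieDeriv f)^[k] (x * x ^ j) ∈ P := by
          intro k
          have := h k
          rwa [pow_succ'] at this
        exact absurd (ih hj.ne' (iterMem_mul_right f hP h' hx)) hx

end Stmt12Aux

end Part3

/-- If an ideal I of ℝ[x₁,…,xₙ] is closed under Lie differentiation
with respect to x' = f(x), then so is its real radical. -/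
theorem stmt12 (n : ℕ) (f : Fin n → MvPolynomial (Fin n) ℝ)
    (I : Ideal (MvPolynomial (Fin n) ℝ))
    (hI : ∀ p ∈ I, lieDeriv f p ∈ I) :
    ∀ p ∈ realRadical I, lieDeriv f p ∈ realRadical I := by
  intro p hp
  obtain ⟨m, s, g, hmem⟩ := hp
  by_contra hcon
  obtain ⟨P, hIP, hPprime, hPreal, haP⟩ := Stmt12Aux.exists_real_prime hcon
  have hQI : ∀ q ∈ I, ∀ k, (lieDeriv f)^[k] q ∈ P := fun q hq k =>
    hIP (Stmt12Aux.iter_mem_I f hI k q hq)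
  set c : Fin (s + 1) → MvPolynomial (Fin n) ℝ := Fin.cons (p ^ m) g with hc
  have hsum : ∑ i, c i ^ 2 = p ^ (2 * m) + ∑ i, g i ^ 2 := by
    rw [Fin.sum_univ_succ]
    simp [hc, ← pow_mul, mul_comm m 2]
  have hcQ : ∀ k, (lieDeriv f)^[k] (∑ i, c i ^ 2) ∈ P := by
    intro k; rw [hsum]; exact hQI _ hmem k
  have hpm : ∀ k, (lieDeriv f)^[k] (p ^ m) ∈ P := by
    intro k
    have := Stmt12Aux.iterMem_real f hPreal c hcQ k 0
    simpa [hc] using this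
  rcases Nat.eq_zero_or_pos m with rfl | hm
  · have h1 : (1 : MvPolynomial (Fin n) ℝ) ∈ P := by simpa using hpm 0
    exact hPprime.ne_top ((Ideal.eq_top_iff_one P).2 h1)
  · have hpQ := Stmt12Aux.pow_iterMem f hPprime m hm.ne' hpm
    have : lieDeriv f p ∈ P := by simpa using hpQ 1
    exact haP this
end

section
/- Let f₁,…,fₙ ∈ ℝ[x₁,…,xₙ] and let I be a δ-stable ideal of the differential polynomial ring ℝ{x₁,…,xₙ} (that is, δ(I) ⊆ I) such that x_i^{(1)} − ι(f_i) ∈ I for all 1 ≤ i ≤ n. Then for every p ∈ ℝ[x₁,…,xₙ] with ι(p) ∈ I, the image of the Lie derivative satisfies ι(L(p)) ∈ I, where L(p) = Σᵢ (∂p/∂xᵢ)·fᵢ. -/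
open MvPolynomial

/-- The differential polynomial ring ℝ{x₁,…,xₙ}: the polynomial ring over ℝ in
the indeterminates x_i^{(k)}, indexed by pairs (i, k). -/
abbrev DiffPoly (n : ℕ) : Type := MvPolynomial (Fin n × ℕ) ℝ

/-- The derivation δ on ℝ{x₁,…,xₙ} with δ(x_i^{(k)}) = x_i^{(k+1)}. -/
noncomputable def delta (n : ℕ) : Derivation ℝ (DiffPoly n) (DiffPoly n) :=
  MvPolynomial.mkDerivation ℝ (fun v : Fin n × ℕ => X (v.1, v.2 + 1))

/-- The ring embedding ι : ℝ[x₁,…,xₙ] → ℝ{x₁,…,xₙ} sending x_i to x_i^{(0)}. -/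
noncomputable def iota {n : ℕ} (p : MvPolynomial (Fin n) ℝ) : DiffPoly n :=
  rename (fun i : Fin n => (i, 0)) p

/-! Differentiating `ι p ∈ I` gives `Σᵢ ι(∂p/∂xᵢ) · x_i^{(1)} ∈ I` by the chain rule; modulo `I`
each `x_i^{(1)}` may be replaced by `ι(fᵢ)`, which turns this sum into `ι(L p)`. -/

theorem Derivation.map_mvPolynomial_aeval {R A M σ : Type*} [CommSemiring R] [CommSemiring A]
    [Algebra R A] [AddCommMonoid M] [Module A M] [Module R M] [IsScalarTower R A M] [Fintype σ]
    (D : Derivation R A M) (x : σ → A) (p : MvPolynomial σ R) :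
    D (aeval x p) = ∑ i, aeval x (pderiv i p) • D (x i) := by
  classical
  induction p using MvPolynomial.induction_on with
  | C a => simp
  | add p q hp hq => simp only [map_add, hp, hq, add_smul, Finset.sum_add_distrib]
  | mul_X p i hp =>
    rw [map_mul, aeval_X, Derivation.leibniz, hp]
    simp [pderiv_X, Pi.single_apply, apply_ite (aeval x), ite_smul, add_smul,
      Finset.sum_add_distrib, Finset.smul_sum, smul_smul]

theorem delta_iota {n : ℕ} (p : MvPolynomial (Fin n) ℝ) :
    delta n (iota p) = ∑ i, iota (pderiv i p) * X (i, 1) := by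
  simp only [iota, rename_eq_aeval]
  rw [Derivation.map_mvPolynomial_aeval]
  simp only [Function.comp_apply, delta, mkDerivation_X, smul_eq_mul]

/-- If I is a δ-stable ideal of ℝ{x₁,…,xₙ} containing
x_i^{(1)} − ι(f_i) for all i, then for every p ∈ ℝ[x₁,…,xₙ] with ι(p) ∈ I we have
ι(L(p)) ∈ I. -/
theorem stmt16 (n : ℕ) (f : Fin n → MvPolynomial (Fin n) ℝ)
    (I : Ideal (DiffPoly n))
    (hstable : ∀ q ∈ I, delta n q ∈ I)
    (hode : ∀ i : Fin n, (X (i, 1) : DiffPoly n) - iota (f i) ∈ I)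
    (p : MvPolynomial (Fin n) ℝ) (hp : iota p ∈ I) :
    iota (lieDeriv f p) ∈ I := by
  have hsplit : iota (lieDeriv f p) =
      delta n (iota p) - ∑ i, iota (pderiv i p) * (X (i, 1) - iota (f i)) := by
    rw [delta_iota, ← Finset.sum_sub_distrib]
    simp only [mul_sub, sub_sub_cancel, lieDeriv, iota, map_sum, map_mul]
  rw [hsplit]
  exact I.sub_mem (hstable _ hp) (I.sum_mem fun i _ => I.mul_mem_left _ (hode i))
end

section
/- Let f₁,…,fₙ, p₁,…,p_m ∈ ℝ[x₁,…,xₙ]. In the differential polynomial ring ℝ{x₁,…,xₙ}, let A = {x_i^{(1)} − ι(f_i) : 1 ≤ i ≤ n} ∪ {ι(p_j) : 1 ≤ j ≤ m} and let [A] be the smallest δ-stable ideal containing A. Then the set of p ∈ ℝ[x₁,…,xₙ] with ι(p) ∈ [A] equals the ideal of ℝ[x₁,…,xₙ] generated by all higher Lie derivatives L^{(k)}(p_j) for k ≥ 0 and 1 ≤ j ≤ m. -/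
/-!
Let `L` be the Lie derivative of the vector field `f`, viewed as a derivation of `ℝ[x]`.
Evaluating `x_i^{(k)} ↦ L^k(x_i)` is an algebra map `π : ℝ{x} → ℝ[x]` with `π ∘ ι = id`
and `π ∘ δ = L ∘ π`; it kills every `x_i^{(1)} - ι(f_i)` and sends `δ^k(ι p_j)` to
`L^k(p_j)`, so it maps `[A]` into the ideal of Lie derivatives. Conversely, modulo the
`δ`-stable ideal `[A]` the derivation `δ` acts on `ι(ℝ[x])` as `L` does, so
`ι(L^k p_j) ≡ δ^k(ι p_j) ≡ 0`.
-/

open MvPolynomial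

/-- The differential ideal [A] generated by A ⊆ ℝ{x₁,…,xₙ}: the ideal generated by
all δ^k(a) for a ∈ A and k ∈ ℕ (equivalently, the smallest δ-stable ideal ⊇ A). -/
noncomputable def diffIdealGen (n : ℕ) (A : Set (DiffPoly n)) : Ideal (DiffPoly n) :=
  Ideal.span {q | ∃ a ∈ A, ∃ k : ℕ, q = (fun x => delta n x)^[k] a}

section General

variable {R σ B : Type*} [CommRing R] [CommRing B] [Algebra R B]

theorem MvPolynomial.derivation_apply_sub_mem_of_forall_X
    (φ : MvPolynomial σ R →ₐ[R] B) (D : Derivation R (MvPolynomial σ R) (MvPolynomial σ R))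
    (E : Derivation R B B) (I : Ideal B) (h : ∀ i, E (φ (X i)) - φ (D (X i)) ∈ I)
    (p : MvPolynomial σ R) : E (φ p) - φ (D p) ∈ I := by
  induction p using MvPolynomial.induction_on with
  | C a =>
    rw [← algebraMap_eq, AlgHom.commutes, Derivation.map_algebraMap, Derivation.map_algebraMap,
      map_zero, sub_zero]
    exact I.zero_mem
  | add p q hp hq =>
    rw [map_add, map_add, map_add, map_add, add_sub_add_comm]
    exact I.add_mem hp hq
  | mul_X p i hp =>
    have key : E (φ (p * X i)) - φ (D (p * X i)) =
        φ p * (E (φ (X i)) - φ (D (X i))) + φ (X i) * (E (φ p) - φ (D p)) := by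
      simp only [map_mul, Derivation.leibniz, smul_eq_mul, map_add]
      ring
    rw [key]
    exact I.add_mem (I.mul_mem_left _ (h i)) (I.mul_mem_left _ hp)

theorem MvPolynomial.derivation_apply_eq_of_forall_X
    (φ : MvPolynomial σ R →ₐ[R] B) (D : Derivation R (MvPolynomial σ R) (MvPolynomial σ R))
    (E : Derivation R B B) (h : ∀ i, E (φ (X i)) = φ (D (X i))) (p : MvPolynomial σ R) :
    E (φ p) = φ (D p) := by
  rw [← sub_eq_zero, ← Ideal.mem_bot]
  exact derivation_apply_sub_mem_of_forall_X φ D E ⊥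
    (fun i => by rw [Ideal.mem_bot, sub_eq_zero, h]) p

theorem Derivation.apply_mem_span_iterate (E : Derivation R B B) (S : Set B) {b : B}
    (hb : b ∈ Ideal.span {q | ∃ a ∈ S, ∃ k : ℕ, q = E^[k] a}) :
    E b ∈ Ideal.span {q | ∃ a ∈ S, ∃ k : ℕ, q = E^[k] a} := by
  induction hb using Submodule.span_induction with
  | mem x hx =>
    obtain ⟨a, ha, k, rfl⟩ := hx
    exact Ideal.subset_span ⟨a, ha, k + 1, (Function.iterate_succ_apply' _ _ _).symm⟩
  | zero => simp
  | add x y _ _ hx hy => rw [map_add]; exact Ideal.add_mem _ hx hy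
  | smul r x hx ihx =>
    rw [smul_eq_mul, Derivation.leibniz, smul_eq_mul, smul_eq_mul]
    exact Ideal.add_mem _ (Ideal.mul_mem_left _ _ ihx) (Ideal.mul_mem_right _ _ hx)

theorem Derivation.iterate_apply_sub_mem {A : Type*} (φ : A → B) (D : A → A)
    (E : Derivation R B B) {I : Ideal B} (hI : ∀ b ∈ I, E b ∈ I)
    (h : ∀ a, E (φ a) - φ (D a) ∈ I) (k : ℕ) (a : A) :
    E^[k] (φ a) - φ (D^[k] a) ∈ I := by
  induction k with
  | zero => simp
  | succ k ih =>
    have split : E^[k + 1] (φ a) - φ (D^[k + 1] a) =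
        E (E^[k] (φ a) - φ (D^[k] a)) + (E (φ (D^[k] a)) - φ (D (D^[k] a))) := by
      rw [map_sub, Function.iterate_succ_apply', Function.iterate_succ_apply']
      ring
    rw [split]
    exact I.add_mem (hI _ ih) (h _)

end General

section Lie

variable {n : ℕ} (f : Fin n → MvPolynomial (Fin n) ℝ)

noncomputable def lieDerivation :
    Derivation ℝ (MvPolynomial (Fin n) ℝ) (MvPolynomial (Fin n) ℝ) :=
  ∑ i, f i • pderiv i

theorem lieDerivation_apply (p : MvPolynomial (Fin n) ℝ) :
    lieDerivation f p = lieDeriv f p := by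
  rw [lieDerivation, ← Derivation.coeFnAddMonoidHom_apply, map_sum, Finset.sum_apply]
  simp [Derivation.coeFnAddMonoidHom_apply, lieDeriv, mul_comm]

theorem iterate_lieDeriv (k : ℕ) : (lieDeriv f)^[k] = (lieDerivation f)^[k] := by
  rw [funext (lieDerivation_apply f)]

theorem lieDerivation_X (i : Fin n) : lieDerivation f (X i) = f i := by
  simp [lieDerivation_apply, lieDeriv, pderiv_X, Pi.single_apply]

noncomputable def lieEval : DiffPoly n →ₐ[ℝ] MvPolynomial (Fin n) ℝ :=
  aeval fun v => (lieDerivation f)^[v.2] (X v.1)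

theorem lieEval_iota (p : MvPolynomial (Fin n) ℝ) : lieEval f (iota p) = p := by
  rw [iota, lieEval, aeval_rename]
  exact aeval_X_left_apply p

theorem lieEval_X_one_sub_iota (i : Fin n) : lieEval f (X (i, 1) - iota (f i)) = 0 := by
  rw [map_sub, lieEval_iota, sub_eq_zero]
  simp [lieEval, lieDerivation_X]

theorem lieEval_delta (q : DiffPoly n) : lieEval f (delta n q) = lieDerivation f (lieEval f q) :=
  (derivation_apply_eq_of_forall_X _ _ _
    (fun v => by simp [lieEval, delta, mkDerivation_X, Function.iterate_succ_apply']) q).symm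

theorem lieEval_iterate_delta (k : ℕ) (q : DiffPoly n) :
    lieEval f ((delta n)^[k] q) = (lieDerivation f)^[k] (lieEval f q) :=
  (Function.Semiconj.iterate_right (lieEval_delta f) k) q

variable {J : Type*} (P : J → MvPolynomial (Fin n) ℝ)

theorem diffIdealGen_le_comap_lieEval :
    diffIdealGen n
        ({q | ∃ i : Fin n, q = X (i, 1) - iota (f i)} ∪ {q | ∃ j, q = iota (P j)}) ≤
      (Ideal.span {q | ∃ j, ∃ k : ℕ, q = (lieDeriv f)^[k] (P j)}).comap (lieEval f) := by
  rw [diffIdealGen, Ideal.span_le]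
  rintro q ⟨a, ha, k, rfl⟩
  rw [SetLike.mem_coe, Ideal.mem_comap, lieEval_iterate_delta]
  rcases ha with ⟨i, rfl⟩ | ⟨j, rfl⟩
  · rw [lieEval_X_one_sub_iota, Function.iterate_fixed (map_zero _)]
    exact Ideal.zero_mem _
  · rw [lieEval_iota, ← iterate_lieDeriv]
    exact Ideal.subset_span ⟨j, k, rfl⟩

theorem span_iterate_lieDeriv_le_comap_iota :
    Ideal.span {q | ∃ j, ∃ k : ℕ, q = (lieDeriv f)^[k] (P j)} ≤
      (diffIdealGen n
        ({q | ∃ i : Fin n, q = X (i, 1) - iota (f i)} ∪ {q | ∃ j, q = iota (P j)})).comap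
          (rename fun i : Fin n => (i, 0)) := by
  set I := diffIdealGen n
    ({q | ∃ i : Fin n, q = X (i, 1) - iota (f i)} ∪ {q | ∃ j, q = iota (P j)})
  have hX (i : Fin n) : delta n (iota (X i)) - iota (lieDerivation f (X i)) ∈ I := by
    rw [show delta n (iota (X i)) = X (i, 1) by simp [iota, delta, mkDerivation_X],
      lieDerivation_X]
    exact Ideal.subset_span ⟨_, Or.inl ⟨i, rfl⟩, 0, rfl⟩
  have hdelta_iota (k : ℕ) (p : MvPolynomial (Fin n) ℝ) :
      (delta n)^[k] (iota p) - iota ((lieDerivation f)^[k] p) ∈ I :=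
    Derivation.iterate_apply_sub_mem iota _ (delta n)
      (fun _ => (delta n).apply_mem_span_iterate _)
      (derivation_apply_sub_mem_of_forall_X (rename fun i => (i, 0)) _ _ _ hX) k p
  rw [Ideal.span_le]
  rintro q ⟨j, k, rfl⟩
  have hgen : (delta n)^[k] (iota (P j)) ∈ I :=
    Ideal.subset_span ⟨iota (P j), Or.inr ⟨j, rfl⟩, k, rfl⟩
  rw [SetLike.mem_coe, Ideal.mem_comap, iterate_lieDeriv]
  have hsub := I.sub_mem hgen (hdelta_iota k (P j))
  rwa [sub_sub_cancel] at hsub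

end Lie

/-- With A = {x_i^{(1)} − ι(f_i)} ∪ {ι(p_j)} in ℝ{x₁,…,xₙ},
the nondifferential part of [A] is the ideal of ℝ[x₁,…,xₙ] generated by all
higher Lie derivatives L^{(k)}(p_j). -/
theorem stmt17 (n m : ℕ) (f : Fin n → MvPolynomial (Fin n) ℝ)
    (P : Fin m → MvPolynomial (Fin n) ℝ) :
    ∀ p : MvPolynomial (Fin n) ℝ,
      iota p ∈ diffIdealGen n
          ({q | ∃ i : Fin n, q = (X (i, 1) : DiffPoly n) - iota (f i)} ∪
           {q | ∃ j : Fin m, q = iota (P j)}) ↔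
        p ∈ Ideal.span {q | ∃ (j : Fin m) (k : ℕ), q = (lieDeriv f)^[k] (P j)} :=
  fun p =>
    ⟨fun hp => by simpa only [Ideal.mem_comap, lieEval_iota] using
        diffIdealGen_le_comap_lieEval f P hp,
      fun hp => span_iterate_lieDeriv_le_comap_iota f P hp⟩
end

section
/- Define T : ℕ × ℕ → ℕ recursively by T(d,0) = d and T(d,k+1) = F_{2·T(d,k)+1} · T(d,k), where F_j is the j-th Fibonacci number (F₀ = 0, F₁ = 1, F_{j+2} = F_{j+1} + F_j). Define tower(0,t) = t and tower(h+1,t) = 2^{tower(h,t)}, and set Tower(d,1) = 2^{3d+1} and Tower(d,n) = tower(n, 3d+n+1) for n ≥ 2. Then for all natural numbers d, n ≥ 1, T(d,n) < Tower(d,n). -/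
/-- The degree bound T(d,k) for `Triangulate`: T(d,0) = d and
T(d,k+1) = F_{2·T(d,k)+1} · T(d,k), where F_j is the j-th Fibonacci number. -/
def T (d : ℕ) : ℕ → ℕ
  | 0 => d
  | k + 1 => Nat.fib (2 * T d k + 1) * T d k

/-- tower(h,t): an exponent tower of h copies of 2 topped by t. -/
def tower : ℕ → ℕ → ℕ
  | 0, t => t
  | h + 1, t => 2 ^ tower h t

/-- Tower(d,1) = 2^{3d+1}; Tower(d,n) = tower(n, 3d+n+1) for n ≥ 2. -/
def Tower (d n : ℕ) : ℕ := if n = 1 then 2 ^ (3 * d + 1) else tower n (3 * d + n + 1)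

lemma fib_le_pow : ∀ n : ℕ, Nat.fib (n + 1) ≤ 2 ^ n := by
  intro n
  induction n using Nat.strong_induction_on with
  | _ n ih =>
    match n with
    | 0 => simp
    | 1 => simp [Nat.fib]
    | k + 2 =>
      have h1 := ih k (by omega)
      have h2 : Nat.fib (k + 2) ≤ 2 ^ (k + 1) := ih (k + 1) (by omega)
      have : Nat.fib (k + 3) = Nat.fib (k + 1) + Nat.fib (k + 2) := by
        rw [show k + 3 = (k + 1) + 2 by ring, Nat.fib_add_two]
      rw [this]
      have : (2:ℕ) ^ (k + 2) = 2 ^ k + 2 ^ k + 2 ^ (k+1) := by ring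
      omega

lemma le_tower (h t : ℕ) : t ≤ tower h t := by
  induction h with
  | zero => simp [tower]
  | succ m ih =>
    have := (Nat.lt_two_pow_self : tower m t < 2 ^ tower m t)
    simp only [tower]
    omega

lemma tower_mono (h : ℕ) : ∀ t, tower h t + 1 ≤ tower h (t + 1) := by
  induction h with
  | zero => intro t; simp [tower]
  | succ m ih =>
    intro t
    simp only [tower]
    calc 2 ^ tower m t + 1 ≤ 2 ^ (tower m t + 1) := by
          have : (1:ℕ) ≤ 2 ^ tower m t := Nat.one_le_two_pow
          rw [pow_succ]; omega
      _ ≤ 2 ^ tower m (t + 1) := Nat.pow_le_pow_right (by norm_num) (ih t)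

lemma tower_step (m t : ℕ) (ht : 2 ≤ t) : tower (m + 1) t + 2 ≤ tower (m + 1) (t + 1) := by
  have h1 : tower m t + 1 ≤ tower m (t + 1) := tower_mono m t
  have h2 : t ≤ tower m t := le_tower m t
  simp only [tower]
  calc 2 ^ tower m t + 2 ≤ 2 * 2 ^ tower m t := by
        have : (2:ℕ) ≤ 2 ^ tower m t :=
          le_trans (by omega) (Nat.pow_le_pow_right (by norm_num) (le_trans ht h2))
        omega
    _ = 2 ^ (tower m t + 1) := by ring
    _ ≤ 2 ^ tower m (t + 1) := Nat.pow_le_pow_right (by norm_num) h1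

/-- Explicit bounds on degree complexity of `Triangulate`:
for all natural numbers d, n ≥ 1, T(d,n) < Tower(d,n). -/
theorem stmt18 : ∀ d n : ℕ, 1 ≤ d → 1 ≤ n → T d n < Tower d n := by
  intro d n hd hn
  suffices H : ∀ m : ℕ, 1 ≤ m →
      T d m < Tower d m ∧ 3 * T d m < tower m (3 * d + m + 2) by
    exact (H n hn).1
  intro m hm
  induction m, hm using Nat.le_induction with
  | base =>
    have hT1 : T d 1 = Nat.fib (2 * d + 1) * d := by simp [T]
    have hfib : Nat.fib (2 * d + 1) ≤ 2 ^ (2 * d) := fib_le_pow (2 * d)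
    have hd2 : d < 2 ^ d := Nat.lt_two_pow_self
    have key : T d 1 < 2 ^ (3 * d) := by
      rw [hT1]
      calc Nat.fib (2 * d + 1) * d ≤ 2 ^ (2 * d) * d :=
            Nat.mul_le_mul_right d hfib
        _ < 2 ^ (2 * d) * 2 ^ d :=
            mul_lt_mul_of_pos_left hd2 (pow_pos (by norm_num) _)
        _ = 2 ^ (3 * d) := by rw [← pow_add]; ring_nf
    constructor
    · have hTow : Tower d 1 = 2 ^ (3 * d + 1) := by simp [Tower]
      have : (2:ℕ) ^ (3 * d + 1) = 2 * 2 ^ (3 * d) := by ring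
      omega
    · have h1 : tower 1 (3 * d + 1 + 2) = 2 ^ (3 * d + 3) := by simp [tower]
      have h2 : (2:ℕ) ^ (3 * d + 3) = 8 * 2 ^ (3 * d) := by ring
      omega
  | succ n hn ih =>
    obtain ⟨ih1, ih2⟩ := ih
    set a := T d n with ha
    have hfib : Nat.fib (2 * a + 1) ≤ 2 ^ (2 * a) := fib_le_pow (2 * a)
    have ha2 : a < 2 ^ a := Nat.lt_two_pow_self
    have key : T d (n + 1) < 2 ^ (3 * a) := by
      show Nat.fib (2 * a + 1) * a < 2 ^ (3 * a)
      calc Nat.fib (2 * a + 1) * a ≤ 2 ^ (2 * a) * a :=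
            Nat.mul_le_mul_right a hfib
        _ < 2 ^ (2 * a) * 2 ^ a :=
            mul_lt_mul_of_pos_left ha2 (pow_pos (by norm_num) _)
        _ = 2 ^ (3 * a) := by rw [← pow_add]; ring_nf
    set e := tower n (3 * d + n + 2) with he
    have key2 : T d (n + 1) < 2 ^ e :=
      lt_of_lt_of_le key (Nat.pow_le_pow_right (by norm_num) (by omega))
    have hTow : Tower d (n + 1) = 2 ^ e := by
      have hne : n + 1 ≠ 1 := by omega
      simp only [Tower, if_neg hne]
      have : 3 * d + (n + 1) + 1 = 3 * d + n + 2 := by ring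
      rw [this]
      rfl
    refine ⟨by rw [hTow]; exact key2, ?_⟩
    obtain ⟨k, rfl⟩ : ∃ k, n = k + 1 := ⟨n - 1, by omega⟩
    have hstep : e + 2 ≤ tower (k + 1) (3 * d + (k + 1) + 3) := by
      have := tower_step k (3 * d + (k + 1) + 2) (by omega)
      have heq : 3 * d + (k + 1) + 2 + 1 = 3 * d + (k + 1) + 3 := by ring
      rw [heq] at this
      exact this
    have hfinal : tower (k + 1 + 1) (3 * d + (k + 1 + 1) + 2) =
        2 ^ tower (k + 1) (3 * d + (k + 1) + 3) := by
      have : 3 * d + (k + 1 + 1) + 2 = 3 * d + (k + 1) + 3 := by ring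
      rw [this]; rfl
    rw [hfinal]
    calc 3 * T d (k + 1 + 1) < 3 * 2 ^ e := by omega
      _ < 2 ^ (e + 2) := by have : (2:ℕ)^(e+2) = 4 * 2^e := by ring
                            have : (1:ℕ) ≤ 2 ^ e := Nat.one_le_two_pow
                            omega
      _ ≤ 2 ^ tower (k + 1) (3 * d + (k + 1) + 3) :=
            Nat.pow_le_pow_right (by norm_num) hstep
end
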